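/- arXiv:1905.00473 — 4 statements merged into one kernel-verified Lean document; each statement's English description precedes it below -/
import Mathlib

section
/- Let M = F Gᵀ for real matrices F, G ∈ ℝ^{m×n} and suppose M = X Σ Yᵀ is a singular value decomposition of M. Then for the orthogonal matrix Ω* = X Yᵀ, one has ‖F - Ω* G‖_F² = ‖F‖_F² + ‖G‖_F² - 2·trace(Σ). -/
/-!
Expanding the square, `‖F - Ω G‖² = ‖F‖² + ‖Ω G‖² - 2 tr(F (Ω G)ᵀ)`.
Since `Ω = X Yᵀ` is orthogonal, `‖Ω G‖ = ‖G‖`, and the cross term is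
`tr(F Gᵀ Ωᵀ) = tr(X S Yᵀ Y Xᵀ) = tr(Xᵀ X S) = tr S`.
-/

open Matrix

/-- Squared Frobenius norm of a real matrix. -/
def frobSq {m n : ℕ} (A : Matrix (Fin m) (Fin n) ℝ) : ℝ :=
  ∑ i, ∑ j, (A i j) ^ 2

lemma frobSq_eq_trace_transpose_mul {m n : ℕ} (A : Matrix (Fin m) (Fin n) ℝ) :
    frobSq A = trace (Aᵀ * A) := by
  simp only [frobSq, trace, diag, mul_apply, transpose_apply, sq]
  exact Finset.sum_comm

lemma trace_mul_transpose_eq_sum {R ι κ : Type*} [NonUnitalNonAssocSemiring R] [Fintype ι]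
    [Fintype κ] (A B : Matrix ι κ R) : trace (A * Bᵀ) = ∑ i, ∑ j, A i j * B i j := by
  simp only [trace, diag, mul_apply, transpose_apply]

lemma frobSq_sub {m n : ℕ} (A B : Matrix (Fin m) (Fin n) ℝ) :
    frobSq (A - B) = frobSq A + frobSq B - 2 * trace (A * Bᵀ) := by
  simp only [frobSq, trace_mul_transpose_eq_sum, Matrix.sub_apply, Finset.mul_sum,
    ← Finset.sum_add_distrib, ← Finset.sum_sub_distrib]
  congr! 2
  ring

lemma frobSq_mul_of_transpose_mul_self_eq_one {k m n : ℕ} {U : Matrix (Fin k) (Fin m) ℝ}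
    (hU : Uᵀ * U = 1) (A : Matrix (Fin m) (Fin n) ℝ) : frobSq (U * A) = frobSq A := by
  rw [frobSq_eq_trace_transpose_mul, frobSq_eq_trace_transpose_mul, transpose_mul,
    Matrix.mul_assoc, ← Matrix.mul_assoc Uᵀ, hU, Matrix.one_mul]

lemma mul_transpose_transpose_mul_mul_transpose_eq_one {R ι : Type*} [CommSemiring R] [Fintype ι]
    [DecidableEq ι] {X Y : Matrix ι ι R} (hX : Xᵀ * X = 1) (hY : Y * Yᵀ = 1) :
    (X * Yᵀ)ᵀ * (X * Yᵀ) = 1 := by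
  rw [transpose_mul, transpose_transpose, Matrix.mul_assoc, ← Matrix.mul_assoc Xᵀ, hX,
    Matrix.one_mul, hY]

lemma trace_mul_mul_transpose_mul_transpose_mul_transpose {R ι : Type*} [CommSemiring R]
    [Fintype ι] [DecidableEq ι] {X Y : Matrix ι ι R} (hX : Xᵀ * X = 1) (hY : Yᵀ * Y = 1)
    (S : Matrix ι ι R) :
    trace (X * S * Yᵀ * (X * Yᵀ)ᵀ) = trace S := by
  rw [transpose_mul, transpose_transpose, Matrix.mul_assoc, ← Matrix.mul_assoc Yᵀ, hY,
    Matrix.one_mul, trace_mul_comm, ← Matrix.mul_assoc, hX, Matrix.one_mul]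

theorem frobSq_procrustes_residual_general {m n : ℕ}
    (F G : Matrix (Fin m) (Fin n) ℝ)
    (X Y S : Matrix (Fin m) (Fin m) ℝ)
    (hX1 : Xᵀ * X = 1)
    (hY1 : Yᵀ * Y = 1) (hY2 : Y * Yᵀ = 1)
    (hSVD : F * Gᵀ = X * S * Yᵀ) :
    frobSq (F - (X * Yᵀ) * G) =
      frobSq F + frobSq G - 2 * Matrix.trace S := by
  rw [frobSq_sub, frobSq_mul_of_transpose_mul_self_eq_one
    (mul_transpose_transpose_mul_mul_transpose_eq_one hX1 hY2), transpose_mul, ← Matrix.mul_assoc,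
    hSVD, trace_mul_mul_transpose_mul_transpose_mul_transpose hX1 hY1]

theorem frobSq_procrustes_residual {m n : ℕ}
    (F G : Matrix (Fin m) (Fin n) ℝ)
    (X Y S : Matrix (Fin m) (Fin m) ℝ)
    (hX1 : Xᵀ * X = 1) (hX2 : X * Xᵀ = 1)
    (hY1 : Yᵀ * Y = 1) (hY2 : Y * Yᵀ = 1)
    (hSdiag : ∀ i j, i ≠ j → S i j = 0)
    (hSpos : ∀ i, 0 ≤ S i i)
    (hSVD : F * Gᵀ = X * S * Yᵀ) :
    frobSq (F - (X * Yᵀ) * G) =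
      frobSq F + frobSq G - 2 * Matrix.trace S :=
  frobSq_procrustes_residual_general F G X Y S hX1 hY1 hY2 hSVD
end

section
/- Let E_k := max_{j ≤ N} e^k_j where nonnegative reals e^k_j satisfy, for all n < N, e^k_{n+1} ≤ e^k_n + ε + r_{n+1} + λ(E_{k-1} + ε) with e^k_0 = e_0, Σ_{j=1}^N r_j ≤ Cη, 0 ≤ λN < 1. Then E_k ≤ (λNε + e_0 + (N+1)ε + Cη)/(1 - λN) for all k, provided E_1 satisfies the same recursive bound. -/
/-!
Each parareal iterate grows by at most `ε + r (n+1) + λ (E (k-1) + ε)` per step, so summing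
over the `N` steps bounds `E k` by `c + λN · E (k-1)` with `c = e0 + Nε + Cη + λNε`.
As `λN < 1`, the affine map `x ↦ c + λN x` sends `[0, c'/(1 - λN)]` into itself for every
`c' ≥ c`, and the bound propagates from `E 1` to all iterates.
-/

open Finset

lemma le_add_mul_add_sum_Icc_of_le_succ {f r : ℕ → ℝ} {a : ℝ} {N : ℕ}
    (hstep : ∀ n < N, f (n + 1) ≤ f n + a + r (n + 1)) :
    ∀ n ≤ N, f n ≤ f 0 + n * a + ∑ j ∈ Icc 1 n, r j := by
  intro n
  induction n with
  | zero => simp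
  | succ n ih =>
    intro hn
    rw [sum_Icc_succ_top (by omega), Nat.cast_succ]
    linarith [hstep n hn, ih (by omega)]

lemma sup'_range_le_of_le_succ {f r : ℕ → ℝ} {a : ℝ} {N : ℕ} (ha : 0 ≤ a) (hr : ∀ j, 0 ≤ r j)
    (hstep : ∀ n < N, f (n + 1) ≤ f n + a + r (n + 1)) :
    (range (N + 1)).sup' nonempty_range_add_one f ≤ f 0 + N * a + ∑ j ∈ Icc 1 N, r j := by
  refine sup'_le _ _ fun n hn => ?_
  have hnN : n ≤ N := Nat.lt_succ_iff.mp (mem_range.mp hn)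
  have hsum : ∑ j ∈ Icc 1 n, r j ≤ ∑ j ∈ Icc 1 N, r j :=
    sum_le_sum_of_subset_of_nonneg (Icc_subset_Icc_right hnN) fun j _ _ => hr j
  have hna : (n : ℝ) * a ≤ N * a := mul_le_mul_of_nonneg_right (by exact_mod_cast hnN) ha
  linarith [le_add_mul_add_sum_Icc_of_le_succ hstep n hnN]

/-- `c / (1 - q)` is the fixed point of the monotone map `x ↦ c + q x`. -/
lemma add_mul_le_div_one_sub {c q x : ℝ} (hq0 : 0 ≤ q) (hq1 : q < 1) (hx : x ≤ c / (1 - q)) :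
    c + q * x ≤ c / (1 - q) := by
  have h1q : 0 < 1 - q := by linarith
  have hfix : c + q * (c / (1 - q)) = c / (1 - q) := by field_simp; ring
  linarith [mul_le_mul_of_nonneg_left hx hq0]

theorem energy_stability_abstract
    (N : ℕ) (e : ℕ → ℕ → ℝ) (r : ℕ → ℝ) (e0 ε lam C η : ℝ)
    (he_nonneg : ∀ k j, 0 ≤ e k j)
    (hε : 0 ≤ ε) (hlam : 0 ≤ lam) (hr : ∀ j, 0 ≤ r j)
    (E : ℕ → ℝ)
    (hE : ∀ k, E k = (Finset.range (N + 1)).sup' Finset.nonempty_range_add_one (fun j => e k j))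
    (he0 : ∀ k, e k 0 = e0)
    (hrec : ∀ k, 1 ≤ k → ∀ n, n < N →
      e k (n + 1) ≤ e k n + ε + r (n + 1) + lam * (E (k - 1) + ε))
    (hres : ∑ j ∈ Finset.Icc 1 N, r j ≤ C * η)
    (hlamN : lam * N < 1)
    (hbase : E 1 ≤ (lam * N * ε + e0 + (N + 1) * ε + C * η) / (1 - lam * N)) :
    ∀ k, 1 ≤ k →
      E k ≤ (lam * N * ε + e0 + (N + 1) * ε + C * η) / (1 - lam * N) := by
  intro k hk
  induction k, hk using Nat.le_induction with
  | base => exact hbase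
  | succ k _ ih =>
    have hEk : 0 ≤ E k := by
      rw [hE k]
      exact (he_nonneg k 0).trans (le_sup' (e k) (mem_range.mpr N.succ_pos))
    have hsweep := sup'_range_le_of_le_succ (f := e (k + 1))
      (add_nonneg hε (mul_nonneg hlam (add_nonneg hEk hε))) hr
      fun n hn => by
        have hstep := hrec (k + 1) (by omega) n hn
        rw [Nat.add_sub_cancel] at hstep
        linarith
    have hfix := add_mul_le_div_one_sub (mul_nonneg hlam N.cast_nonneg) hlamN ih
    calc E (k + 1) ≤ e0 + N * (ε + lam * (E k + ε)) + ∑ j ∈ Icc 1 N, r j := by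
          rw [hE, ← he0 (k + 1)]; exact hsweep
      _ ≤ _ := by linarith
end

section
/- Suppose for all wave field pairs, ‖Λθ𝒞ℛ(v,v̇) - Λθ𝒞ℛ(w,ẇ)‖ ≤ (1+ε_θ)‖Λ(v-w, v̇-ẇ)‖ and ‖(Λℱ - Λθ𝒞ℛ)(v,v̇) - (Λℱ - Λθ𝒞ℛ)(w,ẇ)‖ ≤ κ‖Λ(v-w, v̇-ẇ)‖. Then the parareal iterates u^k satisfy max_{j≤N} ℰ^k_j ≤ κ·((1+ε_θ)^N - 1)/ε_θ · max_{j≤N} ℰ^{k-1}_j, where ℰ^k_n = ‖Λ(u^k_n - u(t_n), u̇^k_n - u̇(t_n))‖. -/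
/-!
Writing the exact step as `F z = B z + (F z - B z)`, the parareal update error splits into the
coarse propagation of the current error, amplified by at most `1 + εθ`, and the fine-minus-coarse
defect applied to the previous iterate's error, of size at most `κ ℰ^{k-1}_n`. The resulting
recursion `ℰ^k_{n+1} ≤ (1 + εθ) ℰ^k_n + κ max_j ℰ^{k-1}_j` with `ℰ^k_0 = 0` is summed by a discrete
Grönwall argument into the geometric factor `∑_{i<N} (1 + εθ)^i = ((1 + εθ)^N - 1) / εθ`.
-/

open Finset

theorem le_mul_geom_sum_of_succ_le {e : ℕ → ℝ} {a c : ℝ} {N : ℕ} (ha : 0 ≤ a) (hc : 0 ≤ c)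
    (h0 : e 0 ≤ 0) (hsucc : ∀ n < N, e (n + 1) ≤ a * e n + c) :
    ∀ n ≤ N, e n ≤ c * ∑ i ∈ range N, a ^ i := by
  have partial_sum : ∀ n ≤ N, e n ≤ c * ∑ i ∈ range n, a ^ i := by
    intro n
    induction n with
    | zero => simpa using h0
    | succ n ih =>
      intro hn
      calc e (n + 1) ≤ a * e n + c := hsucc n hn
        _ ≤ a * (c * ∑ i ∈ range n, a ^ i) + c := by gcongr; exact ih (by omega)
        _ = c * ∑ i ∈ range (n + 1), a ^ i := by rw [geom_sum_succ]; ring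
  intro n hn
  calc e n ≤ c * ∑ i ∈ range n, a ^ i := partial_sum n hn
    _ ≤ c * ∑ i ∈ range N, a ^ i := by gcongr

section Parareal

variable {X Y G : Type*} [AddCommGroup X] [SeminormedAddCommGroup Y]
  [FunLike G X Y] {Λ : G} {F B : X → X} {L κ : ℝ}

theorem norm_map_parareal_update_sub_le [AddMonoidHomClass G X Y]
    (hB : ∀ v w, ‖Λ (B v) - Λ (B w)‖ ≤ L * ‖Λ (v - w)‖)
    (hAB : ∀ v w, ‖(Λ (F v) - Λ (B v)) - (Λ (F w) - Λ (B w))‖ ≤ κ * ‖Λ (v - w)‖) (x y z : X) :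
    ‖Λ (B x + F y - B y - F z)‖ ≤ L * ‖Λ (x - z)‖ + κ * ‖Λ (y - z)‖ := by
  have split : Λ (B x + F y - B y - F z) =
      (Λ (B x) - Λ (B z)) + ((Λ (F y) - Λ (B y)) - (Λ (F z) - Λ (B z))) := by
    simp only [map_add, map_sub]
    abel
  rw [split]
  exact (norm_add_le _ _).trans (add_le_add (hB x z) (hAB y z))

theorem norm_map_eq_zero_of_neg
    (hAB : ∀ v w, ‖(Λ (F v) - Λ (B v)) - (Λ (F w) - Λ (B w))‖ ≤ κ * ‖Λ (v - w)‖) (hκ : κ < 0)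
    (y : X) : ‖Λ y‖ = 0 := by
  have h : 0 ≤ κ * ‖Λ y‖ := by simpa using (norm_nonneg _).trans (hAB y 0)
  exact le_antisymm (nonpos_of_mul_nonneg_right h hκ) (norm_nonneg _)

end Parareal

open Finset in
theorem parareal_energy_convergence
    {X Y : Type*} [NormedAddCommGroup X] [NormedSpace ℝ X]
    [NormedAddCommGroup Y] [NormedSpace ℝ Y]
    (Λ : X →ₗ[ℝ] Y) (F B : X →ₗ[ℝ] X)      -- fine propagator, corrected coarse θ𝒞ℛ
    (εθ κ : ℝ) (hεθ : 0 < εθ)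
    (hB : ∀ v w : X, ‖Λ (B v) - Λ (B w)‖ ≤ (1 + εθ) * ‖Λ (v - w)‖)
    (hAB : ∀ v w : X, ‖(Λ (F v) - Λ (B v)) - (Λ (F w) - Λ (B w))‖ ≤ κ * ‖Λ (v - w)‖)
    (N : ℕ) (u0 : X) (u : ℕ → ℕ → X)
    (hu0 : ∀ k, u k 0 = u0)
    (hrec : ∀ k, 1 ≤ k → ∀ n,
      u k (n + 1) = B (u k n) + F (u (k - 1) n) - B (u (k - 1) n))
    (ℰ : ℕ → ℕ → ℝ)
    (hℰ : ∀ k n, ℰ k n = ‖Λ (u k n - (F ^ n) u0)‖) :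
    ∀ k, 1 ≤ k →
      (range (N + 1)).sup' Finset.nonempty_range_add_one (fun j => ℰ k j) ≤
        κ * ((1 + εθ) ^ N - 1) / εθ *
          (range (N + 1)).sup' Finset.nonempty_range_add_one (fun j => ℰ (k - 1) j) := by
  intro k hk
  rcases lt_or_ge κ 0 with hκ | hκ
  · simp only [hℰ, norm_map_eq_zero_of_neg hAB hκ, sup'_const, mul_zero, le_refl]
  set M := (range (N + 1)).sup' nonempty_range_add_one (fun j => ℰ (k - 1) j)
  have le_M : ∀ n ≤ N, ℰ (k - 1) n ≤ M := fun n hn =>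
    le_sup' (fun j => ℰ (k - 1) j) (mem_range.2 (Nat.lt_succ_of_le hn))
  have hM : 0 ≤ M := (hℰ _ 0 ▸ norm_nonneg _).trans (le_M 0 N.zero_le)
  have hstep : ∀ n < N, ℰ k (n + 1) ≤ (1 + εθ) * ℰ k n + κ * M := fun n hn => by
    calc ℰ k (n + 1) ≤ (1 + εθ) * ℰ k n + κ * ℰ (k - 1) n := by
          simpa only [hℰ, hrec k hk n, pow_succ', Module.End.mul_apply]
            using norm_map_parareal_update_sub_le hB hAB _ _ _
      _ ≤ (1 + εθ) * ℰ k n + κ * M := by gcongr; exact le_M n hn.le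
  have hgronwall := le_mul_geom_sum_of_succ_le (by linarith) (mul_nonneg hκ hM)
    (by simp [hℰ, hu0]) hstep
  refine sup'_le _ _ fun n hn => (hgronwall n (Nat.lt_succ_iff.1 (mem_range.1 hn))).trans_eq ?_
  rw [geom_sum_eq (by linarith), add_sub_cancel_left]
  ring
end

section
/- Let Ω be orthogonal, ‖ΛΛ†‖ ≤ 1, and suppose ℰ(𝒞(U,Ů)) ≤ ℰ(U,Ů) + ε where ℰ(U,Ů) = ‖Λ(U,Ů)‖₂. Then the one-step parareal update satisfies ℰ(U^k_{n+1}, Ů^k_{n+1}) ≤ ℰ(U^k_n, Ů^k_n) + ε + ‖f_{n+1} - Ω g_{n+1}‖₂ + ‖1 - ΛΛ†‖ (ℰ(U^{k-1}_n, Ů^{k-1}_n) + ε), where f_{n+1} = Λℛℱ(u^{k-1}_n, u̇^{k-1}_n) and g_{n+1} = Λ𝒞(U^{k-1}_n, Ů^{k-1}_n). -/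
/-! The update splits as `P (Ω a) + (f - Ω b) + (Ω b - P (Ω b))` with `a`, `b` the coarse
propagations of the current and previous iterates: the first term costs at most `‖a‖` since `P`
is a contraction and `Ω` an isometry, the last at most `lam * ‖b‖`, and the coarse energy
estimate bounds `‖a‖` and `‖b‖`. -/

theorem norm_add_sub_le_norm_add_norm_sub_add_norm_sub {E : Type*} [SeminormedAddCommGroup E]
    (p f q d : E) : ‖p + f - q‖ ≤ ‖p‖ + ‖f - d‖ + ‖d - q‖ :=
  calc ‖p + f - q‖ = ‖p + (f - d) + (d - q)‖ := by abel_nf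
    _ ≤ ‖p‖ + ‖f - d‖ + ‖d - q‖ := norm_add₃_le

theorem norm_parareal_update_le {E : Type*} [SeminormedAddCommGroup E] (P Ω : E → E) {lam : ℝ}
    (hΩ : ∀ y, ‖Ω y‖ = ‖y‖) (hP : ∀ y, ‖P y‖ ≤ ‖y‖) (hlamP : ∀ y, ‖y - P y‖ ≤ lam * ‖y‖)
    (a b f : E) : ‖P (Ω a) + f - P (Ω b)‖ ≤ ‖a‖ + ‖f - Ω b‖ + lam * ‖b‖ :=
  calc ‖P (Ω a) + f - P (Ω b)‖ ≤ ‖P (Ω a)‖ + ‖f - Ω b‖ + ‖Ω b - P (Ω b)‖ :=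
        norm_add_sub_le_norm_add_norm_sub_add_norm_sub _ _ _ _
    _ ≤ ‖Ω a‖ + ‖f - Ω b‖ + lam * ‖Ω b‖ := by gcongr; exacts [hP _, hlamP _]
    _ = ‖a‖ + ‖f - Ω b‖ + lam * ‖b‖ := by rw [hΩ, hΩ]

theorem one_step_parareal_energy_estimate_general
    {X Y : Type*} [NormedAddCommGroup X] [NormedSpace ℝ X]
    [NormedAddCommGroup Y] [NormedSpace ℝ Y]
    (Λ : X →L[ℝ] Y)        -- energy components of coarse-grid wave field pairs
    (C : X →L[ℝ] X)        -- coarse propagator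
    (P : Y →L[ℝ] Y)        -- ΛΛ†
    (Ω : Y →L[ℝ] Y)        -- phase corrector (orthogonal)
    (ε lam : ℝ) (hlam : 0 ≤ lam)
    (hΩ : ∀ y : Y, ‖Ω y‖ = ‖y‖)
    (hP : ∀ y : Y, ‖P y‖ ≤ ‖y‖)
    (hC : ∀ x : X, ‖Λ (C x)‖ ≤ ‖Λ x‖ + ε)
    (hlamP : ∀ y : Y, ‖y - P y‖ ≤ lam * ‖y‖)
    (k n : ℕ) (U : ℕ → ℕ → X) (f g : ℕ → Y)
    (hg : g (n + 1) = Λ (C (U (k - 1) n)))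
    (hupdate : Λ (U k (n + 1)) =
      P (Ω (Λ (C (U k n)))) + f (n + 1) - P (Ω (Λ (C (U (k - 1) n))))) :
    ‖Λ (U k (n + 1))‖ ≤ ‖Λ (U k n)‖ + ε + ‖f (n + 1) - Ω (g (n + 1))‖ +
      lam * (‖Λ (U (k - 1) n)‖ + ε) := by
  rw [hupdate, hg]
  calc _ ≤ ‖Λ (C (U k n))‖ + ‖f (n + 1) - Ω (Λ (C (U (k - 1) n)))‖ +
          lam * ‖Λ (C (U (k - 1) n))‖ := norm_parareal_update_le P Ω hΩ hP hlamP _ _ _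
    _ ≤ _ := by gcongr <;> exact hC _

/-- One-step energy estimate for the phase-corrected parareal update. -/
theorem one_step_parareal_energy_estimate
    {X Xf Y : Type*} [NormedAddCommGroup X] [NormedSpace ℝ X]
    [NormedAddCommGroup Xf] [NormedSpace ℝ Xf]
    [NormedAddCommGroup Y] [NormedSpace ℝ Y]
    (Λ : X →L[ℝ] Y)        -- energy components of coarse-grid wave field pairs
    (C : X →L[ℝ] X)        -- coarse propagator
    (P : Y →L[ℝ] Y)        -- ΛΛ†
    (Ω : Y →L[ℝ] Y)        -- phase corrector (orthogonal)
    (R : Xf →L[ℝ] X) (Fp : Xf →L[ℝ] Xf)  -- restriction and fine propagator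
    (ε lam : ℝ) (hε : 0 ≤ ε) (hlam : 0 ≤ lam)
    (hΩ : ∀ y : Y, ‖Ω y‖ = ‖y‖)
    (hP : ∀ y : Y, ‖P y‖ ≤ ‖y‖)
    (hC : ∀ x : X, ‖Λ (C x)‖ ≤ ‖Λ x‖ + ε)
    (hlamP : ∀ y : Y, ‖y - P y‖ ≤ lam * ‖y‖)
    (k n : ℕ) (U : ℕ → ℕ → X) (u : ℕ → ℕ → Xf) (f g : ℕ → Y)
    (hf : f (n + 1) = Λ (R (Fp (u (k - 1) n))))
    (hg : g (n + 1) = Λ (C (U (k - 1) n)))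
    (hupdate : Λ (U k (n + 1)) =
      P (Ω (Λ (C (U k n)))) + f (n + 1) - P (Ω (Λ (C (U (k - 1) n))))) :
    ‖Λ (U k (n + 1))‖ ≤ ‖Λ (U k n)‖ + ε + ‖f (n + 1) - Ω (g (n + 1))‖ +
      lam * (‖Λ (U (k - 1) n)‖ + ε) :=
  one_step_parareal_energy_estimate_general Λ C P Ω ε lam hlam hΩ hP hC hlamP k n U f g hg hupdate
end
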